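/- The derived vector of the geometric class G_{l_1} S T_{k_0} G_{l_0} (with l_1 ≥ 2, k_0 ≥ 0, l_0 ≥ 0), computed by starting from d^1 = (1), d^2 = (1,1) and applying G l_1 − 2 times, then S once, then T k_0 times, then G l_0 times, equals the sequence consisting of 2 + k_0 + l_0 entries equal to 1 followed by l_1 − 1 entries equal to 2 + k_0. -/

import Mathlib

/-!
Every vector in the recursion has the shape `1, …, 1, c, …, c`. `G` prepends a `1`. On the
all-ones vectors produced by the initial `G`'s, `S` adds the two tails entrywise and so creates a
block of `2`'s. `T` acts entrywise on the tails as `2β − α`, so it continues the arithmetic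
progression `1, 2, 3, …` of the constant block, and each step adds one more `1` to the prefix.
-/

def opG (α : List ℕ) : List ℕ := 1 :: α

def opS (α β : List ℕ) : List ℕ := 1 :: 1 :: List.zipWith (· + ·) α β.tail

def opT (α β : List ℕ) : List ℕ :=
  1 :: 1 :: List.zipWith (fun a b => 2*b - a) α β.tail

def stepG (p : List ℕ × List ℕ) : List ℕ × List ℕ := (p.2, opG p.2)
def stepS (p : List ℕ × List ℕ) : List ℕ × List ℕ := (p.2, opS p.1 p.2)
def stepT (p : List ℕ × List ℕ) : List ℕ × List ℕ := (p.2, opT p.1 p.2)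

open List

lemma zipWith_replicate_append_replicate {α β γ : Type*} (f : α → β → γ) (a n : ℕ)
    (x₁ x₂ : α) (y₁ y₂ : β) :
    zipWith f (replicate a x₁ ++ replicate n x₂) (replicate a y₁ ++ replicate n y₂)
      = replicate a (f x₁ y₁) ++ replicate n (f x₂ y₂) := by
  rw [zipWith_append (by simp), zipWith_replicate, zipWith_replicate, min_self, min_self]

lemma stepG_iterate_snd (n : ℕ) (p : List ℕ × List ℕ) :
    (stepG^[n] p).2 = replicate n 1 ++ p.2 := by
  induction n with
  | zero => rfl
  | succ n ih => rw [Function.iterate_succ_apply', stepG, opG, ih]; rfl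

lemma stepG_iterate_ones (n : ℕ) :
    stepG^[n] ([1], [1, 1]) = (replicate (n + 1) 1, replicate (n + 2) 1) := by
  induction n with
  | zero => rfl
  | succ n ih => rw [Function.iterate_succ_apply', ih]; rfl

lemma opS_replicate (n b c : ℕ) :
    opS (replicate n b) (replicate (n + 1) c) = 1 :: 1 :: replicate n (b + c) := by
  rw [opS, replicate_succ, tail_cons, zipWith_replicate, min_self]

lemma opT_replicate_append (a n b c : ℕ) :
    opT (replicate a 1 ++ replicate n b) (replicate (a + 1) 1 ++ replicate n c)
      = replicate (a + 2) 1 ++ replicate n (2 * c - b) := by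
  rw [opT, replicate_succ, cons_append, tail_cons, zipWith_replicate_append_replicate]
  rfl

lemma stepT_iterate_arithmetic (a n b k : ℕ) :
    stepT^[k] (replicate a 1 ++ replicate n b, replicate (a + 1) 1 ++ replicate n (b + 1))
      = (replicate (a + k) 1 ++ replicate n (b + k),
          replicate (a + k + 1) 1 ++ replicate n (b + k + 1)) := by
  induction k with
  | zero => rfl
  | succ k ih =>
    rw [Function.iterate_succ_apply', ih, stepT, opT_replicate_append]
    have hprogression : 2 * (b + k + 1) - (b + k) = b + (k + 1) + 1 := by omega
    rw [hprogression]
    rfl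

/-- The derived vector of the class `G_{l₁} S T_{k₀} G_{l₀}` (with `l₁ ≥ 2`):
`2 + k₀ + l₀` ones followed by `l₁ − 1` copies of `2 + k₀`. -/
theorem derived_GSTG (l₁ k₀ l₀ : ℕ) (hl₁ : 2 ≤ l₁) :
    (stepG^[l₀] (stepT^[k₀] (stepS (stepG^[l₁-2] ([1], [1, 1]))))).2
      = List.replicate (2+k₀+l₀) 1 ++ List.replicate (l₁-1) (2+k₀) := by
  obtain ⟨m, rfl⟩ : ∃ m, l₁ = m + 2 := ⟨l₁ - 2, by omega⟩
  have hS : stepS (stepG^[m] ([1], [1, 1]))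
      = (replicate 1 1 ++ replicate (m + 1) 1, replicate 2 1 ++ replicate (m + 1) (1 + 1)) := by
    rw [stepG_iterate_ones, stepS, opS_replicate]
    rfl
  rw [Nat.add_sub_cancel, hS, stepT_iterate_arithmetic, stepG_iterate_snd, ← append_assoc,
    ← replicate_add]
  congr 2 <;> omega
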